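/- arXiv:1609.00840 — 2 statements merged into one kernel-verified Lean document; each statement's English description precedes it below -/
import Mathlib

section
/- Let r_1, …, r_n (n ≥ 3) be indeterminates over ℚ, let f = ∏_{i=1}^n (x − r_i), and let F = Res_y(f_1, f_3), a polynomial in x with coefficients in ℚ[r_1, …, r_n]. Then for all indices k, j with 2 ≤ k ≤ n, 2 ≤ j ≤ n, and k ≠ j, the linear polynomial r_1 − 2r_k + r_j divides the evaluation F(r_1) in the ring ℚ[r_1, …, r_n]. -/
/-!
Specialize `r₀ ↦ a := 2 r_k - r_j`, keeping the other roots. After this substitution `x = a` and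
`y = r_j` are distinct roots of `f` whose midpoint `r_k` is a root as well, so `f₁` and `f₃` both
vanish at `y = r_j` once `x = a`. A common root kills the resultant, which is a combination
`u f₁ + v f₃`; hence `F(r₀)` vanishes under `r₀ ↦ a`, i.e. it is divisible by
`r₀ - a = r₀ - 2 r_k + r_j`.
-/

/-- The resultant of two univariate polynomials `p, q` over a commutative ring,
defined as the determinant of the Sylvester matrix of `p` and `q` built from their
(actual) degrees: it has `q.natDegree` shifted rows of coefficients of `p` followed by
`p.natDegree` shifted rows of coefficients of `q`. -/
noncomputable def sylResultant {R : Type} [CommRing R] (p q : Polynomial R) : R :=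
  Matrix.det (Matrix.of fun i j : Fin (p.natDegree + q.natDegree) =>
    if (i : ℕ) < q.natDegree then
      (if (i : ℕ) ≤ (j : ℕ) ∧ (j : ℕ) ≤ (i : ℕ) + p.natDegree
        then p.coeff ((i : ℕ) + p.natDegree - (j : ℕ)) else 0)
    else
      (if (i : ℕ) - q.natDegree ≤ (j : ℕ) ∧ (j : ℕ) ≤ ((i : ℕ) - q.natDegree) + q.natDegree
        then q.coeff (((i : ℕ) - q.natDegree) + q.natDegree - (j : ℕ)) else 0))

open Polynomial

-- The matrix of `sylResultant` is Mathlib's Sylvester matrix, transposed, with rows and columns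
-- listed in reverse order.
theorem sylResultant_eq_resultant {R : Type} [CommRing R] (p q : R[X]) :
    sylResultant p q = p.resultant q := by
  rw [sylResultant, resultant, ← Matrix.det_transpose,
    ← Matrix.det_submatrix_equiv_self Fin.revPerm]
  congr 1
  ext i j
  induction j using Fin.addCases with
  | left j | right j =>
    simp only [Matrix.of_apply, Matrix.submatrix_apply, Matrix.transpose_apply, sylvester,
      Fin.revPerm_apply, Fin.addCases_left, Fin.addCases_right, Fin.val_rev, Set.mem_Icc,
      Fin.val_castAdd, Fin.val_natAdd]
    have := i.isLt; have := j.isLt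
    split_ifs <;> first | rfl | (exfalso; omega) | (congr 1; omega)

theorem Polynomial.map_resultant_eq_zero_of_eval₂_eq_zero {R S : Type*} [CommRing R]
    [CommRing S] (φ : R →+* S) {f g : R[X]} (hfg : f.natDegree ≠ 0 ∨ g.natDegree ≠ 0) {a : S}
    (hf : f.eval₂ φ a = 0) (hg : g.eval₂ φ a = 0) : φ (f.resultant g) = 0 := by
  obtain ⟨u, v, -, -, h⟩ := exists_mul_add_mul_eq_C_resultant f g le_rfl le_rfl hfg
  simpa [eval₂_mul, hf, hg] using (congrArg (eval₂ φ a) h).symm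

theorem MvPolynomial.X_sub_dvd_of_aeval_update_eq_zero {R σ : Type*} [CommRing R]
    [DecidableEq σ] {i : σ} {a g : MvPolynomial σ R}
    (hg : aeval (Function.update X i a) g = 0) : X i - a ∣ g := by
  set I := Ideal.span {X i - a}
  have hX : Ideal.Quotient.mk I a = Ideal.Quotient.mk I (X i) :=
    Ideal.Quotient.eq.mpr (Ideal.mem_span_singleton.mpr ⟨-1, by ring⟩)
  have hcomp : (Ideal.Quotient.mkₐ R I).comp (aeval (Function.update X i a)) =
      Ideal.Quotient.mkₐ R I := by
    refine algHom_ext fun i' => ?_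
    rcases eq_or_ne i' i with rfl | hi'
    · simpa using hX
    · simp [hi']
  rw [← Ideal.mem_span_singleton, ← Ideal.Quotient.eq_zero_iff_mem,
    ← Ideal.Quotient.mkₐ_eq_mk R, ← hcomp, AlgHom.comp_apply, hg, map_zero]

namespace Polynomial

variable {A K : Type*} [CommRing A] [CommRing K] {f : A[X]} {g : A[X][X]}

theorem natDegree_le_natDegree_add_one_of_X_sub_C_X_mul_eq
    (hg : (X - C X) * g = f.map C - C f) : f.natDegree ≤ g.natDegree + 1 := by
  rcases Nat.eq_zero_or_pos f.natDegree with h0 | hpos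
  · omega
  calc f.natDegree = (f.map C - C f).natDegree := by
        rw [natDegree_sub_eq_left_of_natDegree_lt] <;>
          simp [natDegree_map_eq_of_injective C_injective, hpos]
    _ = ((X - C X) * g).natDegree := by rw [hg]
    _ ≤ g.natDegree + 1 :=
        natDegree_mul_le.trans (by have := natDegree_X_sub_C_le (X : A[X]); omega)

theorem eval₂_finsetProd_X_sub_C_self (σ : A →+* K) {ι : Type*} {s : Finset ι} {i : ι}
    (hi : i ∈ s) (r : ι → A) : (∏ j ∈ s, (X - C (r j))).eval₂ σ (σ (r i)) = 0 := by
  rw [eval₂_finsetProd]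
  exact Finset.prod_eq_zero hi (by simp)

variable [IsDomain K] (σ : A →+* K) {a b : K}

theorem eval₂_eq_zero_of_X_sub_C_X_mul_eq (hg : (X - C X) * g = f.map C - C f) (hab : a ≠ b)
    (ha : f.eval₂ σ a = 0) (hb : f.eval₂ σ b = 0) : g.eval₂ (eval₂RingHom σ a) b = 0 := by
  have h : (b - a) * g.eval₂ (eval₂RingHom σ a) b = 0 := by
    simpa [eval₂_mul, eval₂_map, ha, hb] using congrArg (eval₂ (eval₂RingHom σ a) b) hg
  exact (mul_eq_zero.mp h).resolve_left (sub_ne_zero.mpr hab.symm)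

theorem eval₂_eq_zero_of_X_sub_C_X_sq_mul_eq {c : A} (hc : 2 * σ c = 1)
    (hg : (X - C X) ^ 2 * C (C c) * g =
      f.map C - 2 * eval₂ (C.comp C) ((C X + X) * C (C c)) f + C f)
    (hab : a ≠ b) (ha : f.eval₂ σ a = 0) (hb : f.eval₂ σ b = 0)
    (hmid : f.eval₂ σ ((a + b) * σ c) = 0) : g.eval₂ (eval₂RingHom σ a) b = 0 := by
  have hmid_eval : (eval₂ (C.comp C) ((C X + X) * C (C c)) f).eval₂ (eval₂RingHom σ a) b =
      f.eval₂ σ ((a + b) * σ c) := by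
    rw [← coe_eval₂RingHom (eval₂RingHom σ a) b, hom_eval₂]
    congr 1
    · ext; simp
    · simp
  have h : ((b - a) ^ 2 * σ c) * g.eval₂ (eval₂RingHom σ a) b = 0 := by
    simpa [eval₂_mul, eval₂_pow, eval₂_map, ha, hb, hmid_eval, hmid] using
      congrArg (eval₂ (eval₂RingHom σ a) b) hg
  refine (mul_eq_zero.mp h).resolve_left (mul_ne_zero ?_ (right_ne_zero_of_mul_eq_one hc))
  exact pow_ne_zero 2 (sub_ne_zero.mpr hab.symm)

end Polynomial

/-- Let `r 0, …, r (n-1)` (`n ≥ 3`) be indeterminates over `ℚ`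
(the variables of `MvPolynomial (Fin n) ℚ`) and `f = ∏ᵢ (x - rᵢ)`. Bivariate
polynomials in `x, y` are elements of `Polynomial (Polynomial (MvPolynomial (Fin n) ℚ))`,
the outer variable being `y`; `f₁` and `f₃` are determined by `(y - x)·f₁ = f(y) - f(x)`
and `((y - x)²/2)·f₃ = f(y) - 2f((x+y)/2) + f(x)`, and `F = Res_y(f₁, f₃)`. Then for all
indices `k ≠ 0`, `j ≠ 0` with `k ≠ j` (i.e. roots other than the first one `r 0`), the
linear polynomial `r 0 - 2 rₖ + rⱼ` divides `F(r 0)` in `ℚ[r 0, …, r (n-1)]`. -/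
theorem linear_form_dvd_resultant_f1_f3_eval
    (n : ℕ) (hn : 3 ≤ n)
    (f : Polynomial (MvPolynomial (Fin n) ℚ))
    (hf : f = ∏ i : Fin n, (Polynomial.X - Polynomial.C (MvPolynomial.X i)))
    (f1 f3 : Polynomial (Polynomial (MvPolynomial (Fin n) ℚ)))
    (hf1 : (Polynomial.X - Polynomial.C Polynomial.X) * f1 =
      f.map Polynomial.C - Polynomial.C f)
    (hf3 : (Polynomial.X - Polynomial.C Polynomial.X) ^ 2 *
        Polynomial.C (Polynomial.C (MvPolynomial.C (2⁻¹ : ℚ))) * f3 =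
      f.map Polynomial.C
        - 2 * Polynomial.eval₂ (Polynomial.C.comp Polynomial.C)
            ((Polynomial.C Polynomial.X + Polynomial.X) *
              Polynomial.C (Polynomial.C (MvPolynomial.C (2⁻¹ : ℚ)))) f
        + Polynomial.C f)
    (k j : Fin n) (hk : k ≠ ⟨0, by omega⟩) (hj : j ≠ ⟨0, by omega⟩) (hkj : k ≠ j) :
    (MvPolynomial.X (⟨0, by omega⟩ : Fin n) - 2 * MvPolynomial.X k + MvPolynomial.X j) ∣
      Polynomial.eval (MvPolynomial.X ⟨0, by omega⟩) (sylResultant f1 f3) := by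
  set i₀ : Fin n := ⟨0, by omega⟩
  set a : MvPolynomial (Fin n) ℚ := 2 * MvPolynomial.X k - MvPolynomial.X j
  set σ : MvPolynomial (Fin n) ℚ →+* MvPolynomial (Fin n) ℚ :=
    (MvPolynomial.aeval (Function.update MvPolynomial.X i₀ a)).toRingHom
  have hroot (i : Fin n) {b} (hb : σ (MvPolynomial.X i) = b) : f.eval₂ σ b = 0 := by
    rw [hf, ← hb]
    exact eval₂_finsetProd_X_sub_C_self σ (Finset.mem_univ i) _
  have hhalf : 2 * MvPolynomial.C 2⁻¹ = (1 : MvPolynomial (Fin n) ℚ) := by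
    rw [← map_ofNat MvPolynomial.C 2, ← map_mul]; norm_num
  have haj : a ≠ MvPolynomial.X j := fun h =>
    hkj <| MvPolynomial.X_injective <| mul_left_cancel₀ two_ne_zero <| by linear_combination h
  have hmid : (a + MvPolynomial.X j) * MvPolynomial.C 2⁻¹ = MvPolynomial.X k := by
    linear_combination MvPolynomial.X k * hhalf
  have hf1_root := eval₂_eq_zero_of_X_sub_C_X_mul_eq σ hf1 haj
    (hroot i₀ (by simp [σ])) (hroot j (by simp [σ, hj]))
  have hf3_root := eval₂_eq_zero_of_X_sub_C_X_sq_mul_eq σ (by simpa [σ] using hhalf) hf3 haj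
    (hroot i₀ (by simp [σ])) (hroot j (by simp [σ, hj])) (hroot k (by simp [σ, hk, hmid]))
  have hdeg : f1.natDegree ≠ 0 := by
    have := natDegree_le_natDegree_add_one_of_X_sub_C_X_mul_eq hf1
    simp only [hf, natDegree_finsetProd_X_sub_C_eq_card, Finset.card_univ,
      Fintype.card_fin] at this
    omega
  have hres : σ (eval (MvPolynomial.X i₀) (sylResultant f1 f3)) = 0 := by
    rw [← eval₂_at_apply, show σ (MvPolynomial.X i₀) = a by simp [σ], ← coe_eval₂RingHom,
      sylResultant_eq_resultant]
    exact map_resultant_eq_zero_of_eval₂_eq_zero _ (.inl hdeg) hf1_root hf3_root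
  simpa only [a, sub_add] using MvPolynomial.X_sub_dvd_of_aeval_update_eq_zero hres
end

section
/- Let f be the generic monic polynomial of degree n ≥ 3 over ℚ[a_0, …, a_{n-1}], let g_1(x, y) = f_1(x−y, x+y) and g_3(x, y) = f_3(x−y, x+y) (equivalently, 2y·g_1(x, y) = f(x+y) − f(x−y) and 2y^2·g_3(x, y) = f(x+y) + f(x−y) − 2f(x)). Then the resultant of g_1 and g_3 with respect to y equals H^2: Res_y(g_1, g_3) = H^2, an identity of polynomials in x with coefficients in ℚ[a_0, …, a_{n-1}]. -/
/-- The determinant polynomial `H` associated with `f` of degree `n`: the determinant of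
the `(n-2) × (n-2)` matrix whose entry in (1-indexed) row `p`, column `q` is
`f⁽²ᑫ⁻ᵖ⁺¹⁾/(2q-p+1)!` (a Hasse derivative of `f`) when `2q - p + 1 ≥ 1`, and `0`
when `2q - p + 1 ≤ 0`. (Below `p q : Fin (n-2)` are 0-indexed, so the derivative
order is `2q - p + 2`.) -/
noncomputable def Hdet {R : Type} [CommRing R] (n : ℕ) (f : Polynomial R) : Polynomial R :=
  Matrix.det (Matrix.of fun p q : Fin (n - 2) =>
    if (p : ℕ) ≤ 2 * (q : ℕ) + 1 then Polynomial.hasseDeriv (2 * (q : ℕ) + 2 - (p : ℕ)) f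
    else 0)

/-!
The polynomials `g₁` and `g₃` are even in `y`: their coefficients are the odd, resp. even, Hasse
derivatives of `f`, so `g₁ = P₁(y²)` and `g₃ = P₃(y²)`. Sorting rows and columns by parity makes
the Sylvester matrix of `P₁(y²), P₃(y²)` block diagonal with two copies of the Sylvester matrix
of `P₁, P₃`, hence `Res_y(g₁, g₃) = Res(P₁, P₃)²`. Sending the rows of `P₁` to the odd and those
of `P₃` to the even positions, both in reverse order, and reversing the columns turns the
Sylvester matrix of `P₁, P₃` into the matrix defining `H`, so `Res(P₁, P₃) = ±H`.
-/

open Polynomial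

theorem Matrix.det_submatrix_perm_sq {n R : Type*} [Fintype n] [DecidableEq n] [CommRing R]
    (A : Matrix n n R) (σ τ : Equiv.Perm n) : (A.submatrix σ τ).det ^ 2 = A.det ^ 2 := by
  rw [show A.submatrix σ τ = (A.submatrix σ id).submatrix id τ from rfl,
    Matrix.det_permute', Matrix.det_permute]
  simp [mul_pow, ← Int.cast_pow, ← Units.val_pow_eq_pow_val, Int.units_sq]

instance Polynomial.instIsAddTorsionFree {S : Type*} [Semiring S] [IsAddTorsionFree S] :
    IsAddTorsionFree S[X] where
  nsmul_right_injective _n hn _p _q h :=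
    ext fun k => nsmul_right_injective hn (by simpa only [coeff_smul] using congrArg (coeff · k) h)

section SylvesterMatrix

variable {R : Type*} [CommRing R]

/-- The Sylvester matrix for the formal degrees `d` and `e`; `sylResultant` uses the actual ones. -/
def sylvesterMatrix (p q : R[X]) (d e : ℕ) : Matrix (Fin (d + e)) (Fin (d + e)) R :=
  Matrix.of fun i j =>
    if (i : ℕ) < e then
      (if (i : ℕ) ≤ j ∧ (j : ℕ) ≤ i + d then p.coeff (i + d - j) else 0)
    else
      (if (i : ℕ) - e ≤ j ∧ (j : ℕ) ≤ (i - e) + e then q.coeff ((i - e) + e - j) else 0)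

theorem sylvesterMatrix_expand_two_submatrix (p q : R[X]) (d e : ℕ) :
    (sylvesterMatrix (expand R 2 p) (expand R 2 q) (d * 2) (e * 2)).submatrix
        (finProdFinEquiv.trans (finCongr (add_mul d e 2)))
        (finProdFinEquiv.trans (finCongr (add_mul d e 2))) =
      Matrix.blockDiagonal fun _ : Fin 2 => sylvesterMatrix p q d e := by
  ext ⟨r, a⟩ ⟨s, b⟩
  have := a.isLt
  have := b.isLt
  simp only [Matrix.submatrix_apply, Matrix.blockDiagonal_apply, sylvesterMatrix,
    Matrix.of_apply, Equiv.trans_apply, finCongr_apply, Fin.val_cast, finProdFinEquiv_apply_val,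
    coeff_expand two_pos, Fin.ext_iff]
  split_ifs <;> first | rfl | omega | (congr 1; omega)

def hurwitzMatrix (m : ℕ) (h : ℕ → R) : Matrix (Fin m) (Fin m) R :=
  Matrix.of fun p q => if (p : ℕ) ≤ 2 * (q : ℕ) + 1 then h (2 * q + 2 - p) else 0

def hurwitzRowPerm (d e : ℕ) (hed : e ≤ d) (hde : d ≤ e + 1) : Equiv.Perm (Fin (d + e)) where
  toFun r := ⟨if (r : ℕ) < e then 2 * (e - 1 - r) + 1 else 2 * (d + e - 1 - r),
    by have := r.isLt; split <;> omega⟩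
  invFun t := ⟨if (t : ℕ) % 2 = 1 then e - 1 - t / 2 else d + e - 1 - t / 2,
    by have := t.isLt; split <;> omega⟩
  left_inv r := Fin.ext (by have := r.isLt; dsimp only; split_ifs <;> omega)
  right_inv t := Fin.ext (by have := t.isLt; dsimp only; split_ifs <;> omega)

theorem sylvesterMatrix_eq_submatrix_hurwitzMatrix {P Q : R[X]} {d e : ℕ} (hed : e ≤ d)
    (hde : d ≤ e + 1) (hP : P.natDegree ≤ d) (hQ : Q.natDegree ≤ e) {h : ℕ → R}
    (hPh : ∀ k, P.coeff k = h (2 * k + 1)) (hQh : ∀ k, Q.coeff k = h (2 * k + 2)) :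
    sylvesterMatrix P Q d e =
      (hurwitzMatrix (d + e) h).submatrix (hurwitzRowPerm d e hed hde) Fin.revPerm := by
  ext r s
  have := r.isLt
  have := s.isLt
  simp only [sylvesterMatrix, hurwitzMatrix, hurwitzRowPerm, Matrix.of_apply,
    Matrix.submatrix_apply, Equiv.coe_fn_mk, Fin.revPerm_apply, Fin.val_rev]
  split_ifs
  all_goals first
    | rfl
    | omega
    | (rw [hPh]; congr 1; omega)
    | (rw [hQh]; congr 1; omega)
    | (rw [← coeff_eq_zero_of_natDegree_lt (p := P) (n := r + d - s) (by omega), hPh]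
       congr 1; omega)
    | (rw [← coeff_eq_zero_of_natDegree_lt (p := Q) (n := r - s) (by omega), hQh]
       congr 1; omega)

theorem det_sylvesterMatrix_sq_eq_det_hurwitzMatrix_sq {P Q : R[X]} {d e : ℕ} (hed : e ≤ d)
    (hde : d ≤ e + 1) (hP : P.natDegree ≤ d) (hQ : Q.natDegree ≤ e) {h : ℕ → R}
    (hPh : ∀ k, P.coeff k = h (2 * k + 1)) (hQh : ∀ k, Q.coeff k = h (2 * k + 2)) :
    (sylvesterMatrix P Q d e).det ^ 2 = (hurwitzMatrix (d + e) h).det ^ 2 := by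
  rw [sylvesterMatrix_eq_submatrix_hurwitzMatrix hed hde hP hQ hPh hQh,
    Matrix.det_submatrix_perm_sq]

end SylvesterMatrix

section Resultant

variable {R : Type} [CommRing R]

theorem sylResultant_eq_det_sylvesterMatrix {p q : R[X]} {d e : ℕ} (hp : p.natDegree = d)
    (hq : q.natDegree = e) : sylResultant p q = (sylvesterMatrix p q d e).det := by
  subst hp hq
  rfl

theorem sylResultant_expand_two (p q : R[X]) :
    sylResultant (expand R 2 p) (expand R 2 q) = sylResultant p q ^ 2 := by
  rw [sylResultant_eq_det_sylvesterMatrix (natDegree_expand 2 p) (natDegree_expand 2 q),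
    ← Matrix.det_submatrix_equiv_self (finProdFinEquiv.trans (finCongr (add_mul _ _ 2))),
    sylvesterMatrix_expand_two_submatrix, Matrix.det_blockDiagonal, Fin.prod_const,
    sylResultant_eq_det_sylvesterMatrix rfl rfl]

theorem Hdet_eq_det_hurwitzMatrix (n : ℕ) (f : R[X]) :
    Hdet n f = (hurwitzMatrix (n - 2) (hasseDeriv · f)).det :=
  rfl

end Resultant

section EvenOddParts

variable {S : Type*} [CommRing S]

theorem coeff_comp_neg_X (p : S[X]) (j : ℕ) : (p.comp (-X)).coeff j = (-1) ^ j * p.coeff j := by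
  rw [← neg_one_mul (X : S[X]), ← C_1, ← C_neg, comp_C_mul_X_coeff, mul_comm]

theorem eval₂_C_X_add_X_eq_taylor (f : S[X]) :
    eval₂ (C.comp C) (C X + X) f = taylor X (f.map C) := by
  rw [taylor_apply, comp, eval₂_map, add_comm]

theorem hasseDeriv_map {T : Type*} [CommRing T] (φ : S →+* T) (f : S[X]) (k : ℕ) :
    hasseDeriv k (f.map φ) = (hasseDeriv k f).map φ := by
  ext
  simp [hasseDeriv_coeff]

theorem coeff_eval₂_C_X_add_X (f : S[X]) (j : ℕ) :
    (eval₂ (C.comp C) (C X + X) f).coeff j = hasseDeriv j f := by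
  rw [eval₂_C_X_add_X_eq_taylor, taylor_coeff, hasseDeriv_map, eval_map, eval₂_C_X]

theorem eval₂_C_X_sub_X (f : S[X]) :
    eval₂ (C.comp C) (C X - X) f = (eval₂ (C.comp C) (C X + X) f).comp (-X) := by
  rw [eval₂_C_X_add_X_eq_taylor, taylor_apply, comp_assoc, comp, eval₂_map]
  simp only [add_comp, X_comp, C_comp]
  ring_nf

theorem expand_contract_of_coeff_eq_zero {p : ℕ} (hp : p ≠ 0) {g : S[X]}
    (hg : ∀ k, ¬ p ∣ k → g.coeff k = 0) : expand S p (contract p g) = g := by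
  ext k
  rw [coeff_expand (Nat.pos_of_ne_zero hp), coeff_contract hp]
  split_ifs with h
  · rw [Nat.div_mul_cancel h]
  · exact (hg k h).symm

theorem exists_eq_expand_two_of_coeff_eq_ite {g : S[X]} {a : ℕ → S}
    (hg : ∀ k, g.coeff k = if Even k then a k else 0) :
    ∃ P, g = expand S 2 P ∧ ∀ k, P.coeff k = a (2 * k) := by
  refine ⟨contract 2 g, (expand_contract_of_coeff_eq_zero two_ne_zero fun k hk => ?_).symm,
    fun k => ?_⟩
  · rw [hg, if_neg (by rwa [even_iff_two_dvd])]
  · rw [coeff_contract two_ne_zero, hg, if_pos (by simp), mul_comm]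

variable [IsAddTorsionFree S]

theorem coeff_eq_ite_of_two_mul_X_mul_eq {A g : S[X]} (hg : 2 * X * g = A - A.comp (-X))
    (k : ℕ) : g.coeff k = if Even k then A.coeff (k + 1) else 0 := by
  have h := congrArg (coeff · (k + 1)) hg
  simp only [coeff_sub, coeff_comp_neg_X, mul_assoc, coeff_ofNat_mul, coeff_X_mul] at h
  rw [← nsmul_right_inj two_ne_zero, nsmul_eq_mul, Nat.cast_ofNat, h]
  split_ifs with hk
  · rw [pow_succ, hk.neg_one_pow]
    ring
  · rw [(Nat.even_add_one.mpr hk).neg_one_pow]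
    ring

theorem coeff_eq_ite_of_two_mul_X_sq_mul_eq {A g : S[X]}
    (hg : 2 * X ^ 2 * g = A + A.comp (-X) - 2 * C (A.coeff 0)) (k : ℕ) :
    g.coeff k = if Even k then A.coeff (k + 2) else 0 := by
  have h := congrArg (coeff · (k + 2)) hg
  simp only [coeff_sub, coeff_add, coeff_comp_neg_X, mul_assoc, coeff_ofNat_mul, coeff_X_pow_mul,
    coeff_C_succ, mul_zero, sub_zero] at h
  rw [← nsmul_right_inj two_ne_zero, nsmul_eq_mul, Nat.cast_ofNat, h]
  split_ifs with hk
  · rw [pow_add, hk.neg_one_pow]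
    ring
  · rw [pow_add, (Nat.not_even_iff_odd.mp hk).neg_one_pow]
    ring

theorem hasseDeriv_ne_zero {f : S[X]} (hf : f ≠ 0) {k : ℕ}
    (hk : k ≤ f.natDegree) : hasseDeriv k f ≠ 0 := by
  intro h
  have := congrArg (coeff · (f.natDegree - k)) h
  rw [hasseDeriv_coeff, Nat.sub_add_cancel hk, coeff_zero, ← nsmul_eq_mul, nsmul_eq_zero_iff,
    ← leadingCoeff, leadingCoeff_eq_zero, Nat.choose_eq_zero_iff] at this
  exact this.elim hf hk.not_gt

theorem natDegree_eq_of_coeff_eq_hasseDeriv {f : S[X]} {P : S[X][X]} {j : ℕ}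
    (hP : ∀ k, P.coeff k = hasseDeriv (2 * k + j) f) : P.natDegree = (f.natDegree - j) / 2 := by
  refine le_antisymm (natDegree_le_iff_coeff_eq_zero.mpr fun k hk => ?_) ?_
  · rw [hP]
    exact hasseDeriv_eq_zero_of_lt_natDegree _ _ (by omega)
  · rcases Nat.eq_zero_or_pos ((f.natDegree - j) / 2) with h0 | hpos
    · rw [h0]
      exact Nat.zero_le _
    · refine le_natDegree_of_ne_zero ?_
      rw [hP]
      exact hasseDeriv_ne_zero (ne_zero_of_natDegree_gt (n := 0) (by omega)) (by omega)

end EvenOddParts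

theorem sylResultant_eq_Hdet_natDegree_sq {S : Type} [CommRing S] [IsAddTorsionFree S] (f : S[X])
    {g1 g3 : S[X][X]}
    (hg1 : 2 * X * g1 = eval₂ (C.comp C) (C X + X) f - eval₂ (C.comp C) (C X - X) f)
    (hg3 : 2 * X ^ 2 * g3 =
      eval₂ (C.comp C) (C X + X) f + eval₂ (C.comp C) (C X - X) f - 2 * C f) :
    sylResultant g1 g3 = Hdet f.natDegree f ^ 2 := by
  set A := eval₂ (C.comp C) (C X + X) f with hA
  have hA0 : A.coeff 0 = f := by rw [hA, coeff_eval₂_C_X_add_X, hasseDeriv_zero']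
  rw [eval₂_C_X_sub_X, ← hA] at hg1 hg3
  rw [← hA0] at hg3
  obtain ⟨P1, rfl, hP1⟩ :=
    exists_eq_expand_two_of_coeff_eq_ite (coeff_eq_ite_of_two_mul_X_mul_eq hg1)
  obtain ⟨P3, rfl, hP3⟩ :=
    exists_eq_expand_two_of_coeff_eq_ite (coeff_eq_ite_of_two_mul_X_sq_mul_eq hg3)
  simp only [hA, coeff_eval₂_C_X_add_X] at hP1 hP3
  have hd1 := natDegree_eq_of_coeff_eq_hasseDeriv hP1
  have hd3 := natDegree_eq_of_coeff_eq_hasseDeriv hP3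
  rw [sylResultant_expand_two, sylResultant_eq_det_sylvesterMatrix hd1 hd3,
    det_sylvesterMatrix_sq_eq_det_hurwitzMatrix_sq (h := (hasseDeriv · f)) (by omega) (by omega)
      hd1.le hd3.le hP1 hP3,
    Hdet_eq_det_hurwitzMatrix,
    show (f.natDegree - 1) / 2 + (f.natDegree - 2) / 2 = f.natDegree - 2 by omega]

/-- Bivariate polynomials in `x, y` are elements of
`Polynomial (Polynomial (MvPolynomial (Fin n) ℚ))`, the outer variable being `y`. -/
theorem resultant_g1_g3_eq_Hdet_sq_general
    (n : ℕ)
    (f : Polynomial (MvPolynomial (Fin n) ℚ))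
    (hf : f = Polynomial.X ^ n +
      ∑ i : Fin n, Polynomial.C (MvPolynomial.X i) * Polynomial.X ^ (i : ℕ))
    (g1 g3 : Polynomial (Polynomial (MvPolynomial (Fin n) ℚ)))
    (hg1 : 2 * Polynomial.X * g1 =
      Polynomial.eval₂ (Polynomial.C.comp Polynomial.C)
          (Polynomial.C Polynomial.X + Polynomial.X) f
        - Polynomial.eval₂ (Polynomial.C.comp Polynomial.C)
            (Polynomial.C Polynomial.X - Polynomial.X) f)
    (hg3 : 2 * Polynomial.X ^ 2 * g3 =
      Polynomial.eval₂ (Polynomial.C.comp Polynomial.C)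
          (Polynomial.C Polynomial.X + Polynomial.X) f
        + Polynomial.eval₂ (Polynomial.C.comp Polynomial.C)
            (Polynomial.C Polynomial.X - Polynomial.X) f
        - 2 * Polynomial.C f) :
    sylResultant g1 g3 = (Hdet n f) ^ 2 := by
  have hdeg : f.natDegree = n := by
    rw [hf, natDegree_add_eq_left_of_degree_lt (by simpa using degree_sum_fin_lt _),
      natDegree_X_pow]
  simpa only [hdeg] using sylResultant_eq_Hdet_natDegree_sq f hg1 hg3

/-- Let `f = xⁿ + a_{n-1} xⁿ⁻¹ + ⋯ + a₀` (`n ≥ 3`) be the generic monic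
polynomial over `ℚ[a₀, …, a_{n-1}]`. Bivariate polynomials in `x, y` are represented as
elements of `Polynomial (Polynomial (MvPolynomial (Fin n) ℚ))`, the outer variable being
`y`; `g₁ = f₁(x-y, x+y)` and `g₃ = f₃(x-y, x+y)` are determined by
`2y·g₁ = f(x+y) - f(x-y)` and `2y²·g₃ = f(x+y) + f(x-y) - 2f(x)`. Then
`Res_y(g₁, g₃) = H²`, an identity of polynomials in `x` over `ℚ[a₀, …, a_{n-1}]`. -/
theorem resultant_g1_g3_eq_Hdet_sq
    (n : ℕ) (hn : 3 ≤ n)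
    (f : Polynomial (MvPolynomial (Fin n) ℚ))
    (hf : f = Polynomial.X ^ n +
      ∑ i : Fin n, Polynomial.C (MvPolynomial.X i) * Polynomial.X ^ (i : ℕ))
    (g1 g3 : Polynomial (Polynomial (MvPolynomial (Fin n) ℚ)))
    (hg1 : 2 * Polynomial.X * g1 =
      Polynomial.eval₂ (Polynomial.C.comp Polynomial.C)
          (Polynomial.C Polynomial.X + Polynomial.X) f
        - Polynomial.eval₂ (Polynomial.C.comp Polynomial.C)
            (Polynomial.C Polynomial.X - Polynomial.X) f)
    (hg3 : 2 * Polynomial.X ^ 2 * g3 =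
      Polynomial.eval₂ (Polynomial.C.comp Polynomial.C)
          (Polynomial.C Polynomial.X + Polynomial.X) f
        + Polynomial.eval₂ (Polynomial.C.comp Polynomial.C)
            (Polynomial.C Polynomial.X - Polynomial.X) f
        - 2 * Polynomial.C f) :
    sylResultant g1 g3 = (Hdet n f) ^ 2 :=
  resultant_g1_g3_eq_Hdet_sq_general n f hf g1 g3 hg1 hg3
end
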